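/- Let X be a quasi-category and f : Δ¹ → X a 1-simplex. Then f is a quasi-isomorphism if and only if the image of f in the homotopy category π₀𝔠(X) is an isomorphism. -/

import Mathlib

open CategoryTheory Simplicial Opposite Limits MonoidalCategory

namespace Paper

/-- The 0-coskeleton `E S` of a set `S`: the simplicial set with
`(E S)_n = S^{n+1}`, i.e. the nerve of the groupoid with object set `S`
and exactly one morphism between each ordered pair of objects. -/
def E (S : Type) : SSet where
  obj m := Fin (m.unop.len + 1) → S
  map f := TypeCat.ofHom (fun α => α ∘ f.unop.toOrderHom)

/-- The constant map `X ⟶ E S` at a point `s : S`.  For `X = Δ[0]` this is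
the inclusion of the vertex `s` into `E S`. -/
def constE (X : SSet) {S : Type} (s : S) : X ⟶ E S where
  app m := TypeCat.ofHom (fun _ => fun _ => s)

/-- The constant map `X ⟶ Δ[n]` at the vertex `i`.  For `n = 0` this is the
canonical map `X ⟶ Δ[0]` to the terminal simplicial set. -/
def constSimplex (X : SSet) (n : ℕ) (i : Fin (n + 1)) : X ⟶ Δ[n] where
  app m := TypeCat.ofHom (fun _ => SSet.stdSimplex.objEquiv.symm (SimplexCategory.const m.unop ⦋n⦌ i))
  naturality _ _ _ := rfl

/-- The edge inclusion `Δ[1] ⟶ E (Fin 2)`, i.e. the nondegenerate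
1-simplex of `E¹` from the vertex `0` to the vertex `1`. -/
def edgeE : Δ[1] ⟶ E (Fin 2) where
  app m := TypeCat.ofHom (fun α => fun i => SSet.stdSimplex.asOrderHom α i)

/-- A map of simplicial sets is an inner fibration if it has the right lifting
property with respect to all inner horn inclusions `Λ[n, i] ⟶ Δ[n]`, `0 < i < n`. -/
def InnerFibration {X Y : SSet} (p : X ⟶ Y) : Prop :=
  ∀ (n : ℕ) (i : Fin (n + 1)), 0 < i → i < Fin.last n →
    HasLiftingProperty (Λ[n, i]).ι p

/-- A 1-simplex `f` of a simplicial set `X`, with `d₁ f = a` and `d₀ f = b`,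
is a quasi-isomorphism if there are a 1-simplex `g` with `d₁ g = b`, `d₀ g = a`
and 2-simplices `σ`, `τ` with `d₂ σ = f`, `d₀ σ = g`, `d₁ σ = s₀ a` and
`d₂ τ = g`, `d₀ τ = f`, `d₁ τ = s₀ b`. -/
def IsQuasiIso {X : SSet} (f : X _⦋1⦌) : Prop :=
  ∃ (g : X _⦋1⦌) (σ τ : X _⦋2⦌),
    X.δ 1 g = X.δ 0 f ∧ X.δ 0 g = X.δ 1 f ∧
    X.δ 2 σ = f ∧ X.δ 0 σ = g ∧ X.δ 1 σ = X.σ 0 (X.δ 1 f) ∧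
    X.δ 2 τ = g ∧ X.δ 0 τ = f ∧ X.δ 1 τ = X.σ 0 (X.δ 0 f)

/-- The pushout-product `f □ g : (A × D) ∪_{A × C} (B × C) ⟶ B × D`
of two maps `f : A ⟶ B` and `g : C ⟶ D` of simplicial sets. -/
noncomputable def pushoutProd {A B C D : SSet.{u_1}} (f : A ⟶ B) (g : C ⟶ D) :
    pushout (f ▷ C) (A ◁ g) ⟶ B ⊗ D :=
  pushout.desc (B ◁ g) (f ▷ D) (whisker_exchange f g).symm

/-- The inclusion `A ⟶ A × E¹` at the vertex `s` of `E¹ = E (Fin 2)`. -/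
noncomputable def incE1 (A : SSet) (s : Fin 2) : A ⟶ A ⊗ E (Fin 2) :=
  CartesianMonoidalCategory.lift (𝟙 A) (constE A s)

/-- Two maps `f g : A ⟶ Z` are `E¹`-homotopic if there is a homotopy
`H : A × E¹ ⟶ Z` restricting to `f` on `A × {0}` and to `g` on `A × {1}`. -/
def E1Homotopic {A Z : SSet} (f g : A ⟶ Z) : Prop :=
  ∃ H : A ⊗ E (Fin 2) ⟶ Z, incE1 A 0 ≫ H = f ∧ incE1 A 1 ≫ H = g

/-- The set `[A, Z]_{E¹}` of `E¹`-homotopy classes of maps `A ⟶ Z`. -/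
def E1Classes (A Z : SSet) : Type :=
  Quot (@E1Homotopic A Z)

lemma incE1_whiskerRight {A B : SSet} (f : A ⟶ B) (s : Fin 2) :
    incE1 A s ≫ (f ▷ E (Fin 2)) = f ≫ incE1 B s := rfl

/-- Precomposition `[B, Z]_{E¹} → [A, Z]_{E¹}` with a map `f : A ⟶ B`. -/
noncomputable def E1Precomp {A B : SSet} (f : A ⟶ B) (Z : SSet) :
    E1Classes B Z → E1Classes A Z :=
  Quot.map (fun g => f ≫ g) (by
    rintro g g' ⟨H, h0, h1⟩
    refine ⟨(f ▷ E (Fin 2)) ≫ H, ?_, ?_⟩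
    · rw [← Category.assoc, incE1_whiskerRight, Category.assoc, h0]
    · rw [← Category.assoc, incE1_whiskerRight, Category.assoc, h1])

/-- A map of simplicial sets `f : A ⟶ B` is a Joyal equivalence if
`[B, Z]_{E¹} → [A, Z]_{E¹}` is a bijection for every quasicategory `Z`. -/
def JoyalEquiv {A B : SSet} (f : A ⟶ B) : Prop :=
  ∀ (Z : SSet), SSet.Quasicategory Z → Function.Bijective (E1Precomp f Z)

end Paper

namespace Paper

/-- The underlying quiver of a simplicial set `X`: objects are the 0-simplices,
and arrows from `a` to `b` are the 1-simplices `f` with `d₁ f = a` and `d₀ f = b`. -/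
def HoQuiv (X : SSet) : Type := X _⦋0⦌

instance (X : SSet) : Quiver (HoQuiv X) :=
  ⟨fun a b => {f : X _⦋1⦌ // X.δ 1 f = a ∧ X.δ 0 f = b}⟩

/-- The morphism of the free category on the quiver of `X` given by a single
1-simplex `f` with `d₁ f = a` and `d₀ f = b`. -/
def pathMk (X : SSet) {a b : HoQuiv X} (f : X _⦋1⦌)
    (h1 : X.δ 1 f = a) (h0 : X.δ 0 f = b) :
    (Paths.of (HoQuiv X)).obj a ⟶ (Paths.of (HoQuiv X)).obj b :=
  Quiver.Hom.toPath (V := HoQuiv X) ⟨f, h1, h0⟩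

/-- The relations defining the homotopy category `π₀𝔠(X)`: for each 0-simplex `a`
the degenerate 1-simplex `s₀ a` is identified with the identity of `a`, and for each
2-simplex `σ` the composite `d₀σ ∘ d₂σ` is identified with `d₁σ`. -/
inductive HoRel (X : SSet) : HomRel (Paths (HoQuiv X))
| degen (a : HoQuiv X) (h1 : X.δ 1 (X.σ 0 a) = a) (h0 : X.δ 0 (X.σ 0 a) = a) :
      HoRel X (pathMk X (X.σ 0 a) h1 h0) (𝟙 ((Paths.of (HoQuiv X)).obj a))
| comp (σ : X _⦋2⦌) (a b c : HoQuiv X)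
      (hf1 : X.δ 1 (X.δ 2 σ) = a) (hf0 : X.δ 0 (X.δ 2 σ) = b)
      (hg1 : X.δ 1 (X.δ 0 σ) = b) (hg0 : X.δ 0 (X.δ 0 σ) = c)
      (hh1 : X.δ 1 (X.δ 1 σ) = a) (hh0 : X.δ 0 (X.δ 1 σ) = c) :
      HoRel X (pathMk X (X.δ 2 σ) hf1 hf0 ≫ pathMk X (X.δ 0 σ) hg1 hg0)
        (pathMk X (X.δ 1 σ) hh1 hh0)

/-- The homotopy category `π₀𝔠(X)` of a simplicial set `X`: the category with objects
the 0-simplices of `X`, generated by the 1-simplices subject to the relations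
`s₀ a = id_a` and `d₁σ = d₀σ ∘ d₂σ`.  (This is the value at `X` of the left adjoint
of the classical nerve functor.) -/
def HoCat (X : SSet) : Type := CategoryTheory.Quotient (HoRel X)

instance (X : SSet) : Category (HoCat X) :=
  inferInstanceAs (Category (CategoryTheory.Quotient (HoRel X)))

/-- The object of `π₀𝔠(X)` corresponding to a 0-simplex. -/
def hoObj (X : SSet) (a : X _⦋0⦌) : HoCat X :=
  (CategoryTheory.Quotient.functor (HoRel X)).obj ((Paths.of (HoQuiv X)).obj a)

/-- The morphism of `π₀𝔠(X)` represented by a 1-simplex `f` with `d₁ f = a` and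
`d₀ f = b`. -/
def hoMk (X : SSet) {a b : X _⦋0⦌} (f : X _⦋1⦌)
    (h1 : X.δ 1 f = a) (h0 : X.δ 0 f = b) :
    hoObj X a ⟶ hoObj X b :=
  (CategoryTheory.Quotient.functor (HoRel X)).map (pathMk X f h1 h0)

end Paper

/-! In a quasicategory `X` the homotopy category `π₀𝔠(X)` maps to the Boardman–Vogt category
of `X` (the `HomotopyCategory₂` of its 2-truncation, whose morphisms are homotopy classes of
edges; it exists because the inner horns `Λ[2, 1]`, `Λ[3, 1]`, `Λ[3, 2]` fill).
There, `[f] ≫ [g] = [h]` holds exactly when some 2-simplex has faces `f`, `g`, `h`, so an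
inverse of `[f]` yields the two 2-simplices of a quasi-inverse. Conversely, the 2-simplices
of a quasi-inverse are defining relations of `π₀𝔠(X)` exhibiting an inverse of `f`. -/

universe u

namespace Paper

open SSet SimplicialObject.Truncated Truncated.HomotopyCategory₂

section HoCat

variable {X : SSet} {x₀ x₁ x₂ : X _⦋0⦌}

def hoMkEdge (e : Edge x₀ x₁) : hoObj X x₀ ⟶ hoObj X x₁ :=
  hoMk X e.edge e.src_eq e.tgt_eq

lemma hoMkEdge_id (x : X _⦋0⦌) : hoMkEdge (Edge.id x) = 𝟙 (hoObj X x) :=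
  CategoryTheory.Quotient.sound _ (HoRel.degen x _ _)

lemma hoMkEdge_comp_of_compStruct {e₀₁ : Edge x₀ x₁} {e₁₂ : Edge x₁ x₂} {e₀₂ : Edge x₀ x₂}
    (h : Edge.CompStruct e₀₁ e₁₂ e₀₂) : hoMkEdge e₀₁ ≫ hoMkEdge e₁₂ = hoMkEdge e₀₂ := by
  have key := CategoryTheory.Quotient.sound _
    (HoRel.comp h.simplex x₀ x₁ x₂ (by simp) (by simp) (by simp) (by simp) (by simp) (by simp))
  rw [Functor.map_comp] at key
  simp only [h.d₀, h.d₁, h.d₂] at key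
  exact key

lemma isIso_hoMkEdge_of_invStruct {e : Edge x₀ x₁} (I : e.InvStruct) : IsIso (hoMkEdge e) :=
  ⟨hoMkEdge I.inv, by rw [hoMkEdge_comp_of_compStruct I.homInvId, hoMkEdge_id],
    by rw [hoMkEdge_comp_of_compStruct I.invHomId, hoMkEdge_id]⟩

lemma isQuasiIso_iff_nonempty_invStruct (f : X _⦋1⦌) :
    IsQuasiIso f ↔ Nonempty (Edge.mk' f).InvStruct := by
  constructor
  · rintro ⟨g, σ, τ, hg₁, hg₀, hσ₂, hσ₀, hσ₁, hτ₂, hτ₀, hτ₁⟩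
    exact ⟨⟨Edge.mk g hg₁ hg₀, Edge.CompStruct.mk σ hσ₂ hσ₀ hσ₁, Edge.CompStruct.mk τ hτ₂ hτ₀ hτ₁⟩⟩
  · rintro ⟨I⟩
    exact ⟨I.inv.edge, I.homInvId.simplex, I.invHomId.simplex, I.inv.src_eq, I.inv.tgt_eq,
      I.homInvId.d₂, I.homInvId.d₀, I.homInvId.d₁, I.invHomId.d₂, I.invHomId.d₀, I.invHomId.d₁⟩

end HoCat

section Horns

variable {X : SSet.{u}}

section FaceIdentities

variable {n : ℕ}

lemma δ_zero_δ_one (x : X _⦋n + 2⦌) : X.δ 0 (X.δ 1 x) = X.δ 0 (X.δ 0 x) :=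
  δ_comp_δ_apply (i := 0) (j := 0) le_rfl x

lemma δ_zero_δ_two (x : X _⦋n + 2⦌) : X.δ 0 (X.δ 2 x) = X.δ 1 (X.δ 0 x) :=
  δ_comp_δ_apply (i := 0) (j := 1) (Fin.zero_le _) x

lemma δ_one_δ_two (x : X _⦋n + 2⦌) : X.δ 1 (X.δ 2 x) = X.δ 1 (X.δ 1 x) :=
  δ_comp_δ_apply (i := 1) (j := 1) le_rfl x

lemma δ_one_δ_three (x : X _⦋n + 3⦌) : X.δ 1 (X.δ 3 x) = X.δ 2 (X.δ 1 x) :=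
  δ_comp_δ_apply (i := 1) (j := 2) (by simp [Fin.le_def, Nat.mod_eq_of_lt]) x

lemma δ_two_δ_three (x : X _⦋n + 3⦌) : X.δ 2 (X.δ 3 x) = X.δ 2 (X.δ 2 x) :=
  δ_comp_δ_apply (i := 2) (j := 2) le_rfl x

end FaceIdentities

lemma Quasicategory.exists_simplex_of_faces [Quasicategory X] {n : ℕ} {i : Fin (n + 3)}
    (h0 : 0 < i) (hn : i < Fin.last (n + 2)) (x : ∀ j : Fin (n + 3), j ≠ i → X _⦋n + 1⦌)
    (hx : ∀ (j k : Fin (n + 3)) (hj : j ≠ i) (hk : k ≠ i) (hjk : j < k),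
        X.δ (k.pred (Fin.ne_zero_of_lt hjk)) (x j hj) =
          X.δ (j.castPred (Fin.ne_last_of_lt hjk)) (x k hk)) :
    ∃ σ : X _⦋n + 2⦌, ∀ j (hj : j ≠ i), X.δ j σ = x j hj := by
  have hcompat : horn.IsCompatible (fun j hj ↦ yonedaEquiv.symm (x j hj)) := by
    simpa only [horn.isCompatible_iff, stdSimplex.δ_comp_yonedaEquiv_symm,
      EmbeddingLike.apply_eq_iff_eq] using hx
  obtain ⟨σ, hσ⟩ := Quasicategory.hornFilling h0 hn hcompat.desc
  refine ⟨yonedaEquiv σ, fun j hj ↦ ?_⟩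
  rw [← stdSimplex.yonedaEquiv_δ_comp, ← horn.ι_ι i j hj, Category.assoc, ← hσ,
    hcompat.ι_desc, Equiv.apply_symm_apply]

variable [Quasicategory X] {x₀ x₁ x₂ x₃ : X _⦋0⦌}

lemma Quasicategory.nonempty_compStruct_of_horn₂₁ (e₀₁ : Edge x₀ x₁) (e₁₂ : Edge x₁ x₂) :
    Nonempty (Σ e₀₂ : Edge x₀ x₂, Edge.CompStruct e₀₁ e₁₂ e₀₂) := by
  obtain ⟨σ, hσ⟩ := Quasicategory.exists_simplex_of_faces (i := 1) (by decide) (by decide)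
    (fun j _ ↦ ![e₁₂.edge, e₁₂.edge, e₀₁.edge] j) <| by
      intro j k hj hk hjk
      fin_cases j <;> fin_cases k <;> simp [Fin.castPred, Fin.castLT] at hj hk hjk ⊢
  have h₂ : X.δ 2 σ = e₀₁.edge := hσ 2 (by decide)
  have h₀ : X.δ 0 σ = e₁₂.edge := hσ 0 (by decide)
  refine ⟨⟨Edge.mk (X.δ 1 σ) ?_ ?_, Edge.CompStruct.mk σ h₂ h₀ rfl⟩⟩
  · rw [← δ_one_δ_two, h₂, e₀₁.src_eq]
  · rw [δ_zero_δ_one, h₀, e₁₂.tgt_eq]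

variable {e₀₁ : Edge x₀ x₁} {e₁₂ : Edge x₁ x₂} {e₂₃ : Edge x₂ x₃}
  {e₀₂ : Edge x₀ x₂} {e₁₃ : Edge x₁ x₃} {e₀₃ : Edge x₀ x₃}

lemma Quasicategory.nonempty_compStruct_of_horn₃₁ (f₃ : Edge.CompStruct e₀₁ e₁₂ e₀₂)
    (f₀ : Edge.CompStruct e₁₂ e₂₃ e₁₃) (f₂ : Edge.CompStruct e₀₁ e₁₃ e₀₃) :
    Nonempty (Edge.CompStruct e₀₂ e₂₃ e₀₃) := by
  obtain ⟨ρ, hρ⟩ := Quasicategory.exists_simplex_of_faces (i := 1) (by decide) (by decide)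
    (fun j _ ↦ ![f₀.simplex, f₀.simplex, f₂.simplex, f₃.simplex] j) <| by
      intro j k hj hk hjk
      fin_cases j <;> fin_cases k <;> simp [Fin.castPred, Fin.castLT] at hj hk hjk ⊢
  have h₀ : X.δ 0 ρ = f₀.simplex := hρ 0 (by decide)
  have h₂ : X.δ 2 ρ = f₂.simplex := hρ 2 (by decide)
  have h₃ : X.δ 3 ρ = f₃.simplex := hρ 3 (by decide)
  exact ⟨Edge.CompStruct.mk (X.δ 1 ρ) (by rw [← δ_one_δ_three, h₃, f₃.d₁])
    (by rw [δ_zero_δ_one, h₀, f₀.d₀]) (by rw [← δ_one_δ_two, h₂, f₂.d₁])⟩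

lemma Quasicategory.nonempty_compStruct_of_horn₃₂ (f₃ : Edge.CompStruct e₀₁ e₁₂ e₀₂)
    (f₀ : Edge.CompStruct e₁₂ e₂₃ e₁₃) (f₁ : Edge.CompStruct e₀₂ e₂₃ e₀₃) :
    Nonempty (Edge.CompStruct e₀₁ e₁₃ e₀₃) := by
  obtain ⟨ρ, hρ⟩ := Quasicategory.exists_simplex_of_faces (i := 2) (by decide) (by decide)
    (fun j _ ↦ ![f₀.simplex, f₁.simplex, f₁.simplex, f₃.simplex] j) <| by
      intro j k hj hk hjk
      fin_cases j <;> fin_cases k <;> simp [Fin.castPred, Fin.castLT] at hj hk hjk ⊢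
  have h₀ : X.δ 0 ρ = f₀.simplex := hρ 0 (by decide)
  have h₁ : X.δ 1 ρ = f₁.simplex := hρ 1 (by decide)
  have h₃ : X.δ 3 ρ = f₃.simplex := hρ 3 (by decide)
  exact ⟨Edge.CompStruct.mk (X.δ 2 ρ) (by rw [← δ_two_δ_three, h₃, f₃.d₂])
    (by rw [δ_zero_δ_two, h₀, f₀.d₁]) (by rw [δ_one_δ_two, h₁, f₁.d₁])⟩

end Horns

instance quasicategory₂_truncation (X : SSet.{u}) [Quasicategory X] :
    ((truncation 2).obj X).Quasicategory₂ where
  fill21 e₀₁ e₁₂ := Quasicategory.nonempty_compStruct_of_horn₂₁ (X := X) e₀₁ e₁₂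
  fill31 f₃ f₀ f₂ := Quasicategory.nonempty_compStruct_of_horn₃₁ (X := X) f₃ f₀ f₂
  fill32 f₃ f₀ f₁ := Quasicategory.nonempty_compStruct_of_horn₃₂ (X := X) f₃ f₀ f₁

lemma exists_compStruct_id_of_isIso_homMk {A : Truncated 2} [A.Quasicategory₂]
    {x y : A _⦋0⦌₂} (e : Truncated.Edge x y) [IsIso (homMk e)] :
    ∃ g : Truncated.Edge y x, Nonempty (e.CompStruct g (.id x)) ∧
      Nonempty (g.CompStruct e (.id y)) := by
  obtain ⟨g, hg⟩ := homMk_surjective (inv (homMk e))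
  refine ⟨g, Truncated.Edge.CompStruct.nonempty_iff.2 ?_,
    Truncated.Edge.CompStruct.nonempty_iff.2 ?_⟩
  · rw [hg, IsIso.hom_inv_id]
    exact (homMk_id (mk x)).symm
  · rw [hg, IsIso.inv_hom_id]
    exact (homMk_id (mk y)).symm

section Comparison

variable (X : SSet) [Quasicategory X]

noncomputable def hoQuivToHomotopyCategory₂ :
    HoQuiv X ⥤q Truncated.HomotopyCategory₂ ((truncation 2).obj X) where
  obj a := mk a
  map e := homMk (Edge.mk e.1 e.2.1 e.2.2).toTruncated

lemma hoQuivToHomotopyCategory₂_map_pathMk {a b : HoQuiv X} (f : X _⦋1⦌) (h₁ : X.δ 1 f = a)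
    (h₀ : X.δ 0 f = b) :
    (Paths.lift (hoQuivToHomotopyCategory₂ X)).map (pathMk X f h₁ h₀) =
      homMk (Edge.mk f h₁ h₀).toTruncated :=
  Paths.lift_toPath _ _

lemma hoQuivToHomotopyCategory₂_respects_hoRel ⦃a b : Paths (HoQuiv X)⦄ (p q : a ⟶ b)
    (h : HoRel X p q) :
    (Paths.lift (hoQuivToHomotopyCategory₂ X)).map p =
      (Paths.lift (hoQuivToHomotopyCategory₂ X)).map q := by
  rcases h with ⟨a, h₁, h₀⟩ | ⟨σ, a, b, c, hf₁, hf₀, hg₁, hg₀, hh₁, hh₀⟩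
  · rw [hoQuivToHomotopyCategory₂_map_pathMk, CategoryTheory.Functor.map_id]
    exact homMk_id _
  · rw [Functor.map_comp, hoQuivToHomotopyCategory₂_map_pathMk,
      hoQuivToHomotopyCategory₂_map_pathMk, hoQuivToHomotopyCategory₂_map_pathMk]
    exact (Edge.CompStruct.mk σ rfl rfl rfl).homotopyCategory₂_fac

noncomputable def toHomotopyCategory₂ :
    HoCat X ⥤ Truncated.HomotopyCategory₂ ((truncation 2).obj X) :=
  CategoryTheory.Quotient.lift _ _ (hoQuivToHomotopyCategory₂_respects_hoRel X)

lemma toHomotopyCategory₂_map_hoMkEdge {x₀ x₁ : X _⦋0⦌} (e : Edge x₀ x₁) :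
    (toHomotopyCategory₂ X).map (hoMkEdge e) = homMk e.toTruncated :=
  (CategoryTheory.Quotient.lift_map_functor_map _ _ _ _).trans
    (hoQuivToHomotopyCategory₂_map_pathMk X _ _ _)

end Comparison

lemma nonempty_invStruct_of_isIso_hoMkEdge {X : SSet} [Quasicategory X] {x₀ x₁ : X _⦋0⦌}
    (e : Edge x₀ x₁) (he : IsIso (hoMkEdge e)) : Nonempty e.InvStruct := by
  have : IsIso (homMk e.toTruncated) := by
    rw [← toHomotopyCategory₂_map_hoMkEdge]
    exact (toHomotopyCategory₂ X).map_isIso _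
  obtain ⟨g, ⟨homInvId⟩, ⟨invHomId⟩⟩ := exists_compStruct_id_of_isIso_homMk e.toTruncated
  exact ⟨⟨.ofTruncated g, .ofTruncated homInvId, .ofTruncated invHomId⟩⟩

/-- Let `X` be a quasicategory and `f` a 1-simplex of `X`.  Then `f`
is a quasi-isomorphism if and only if the image of `f` in the homotopy category
`π₀𝔠(X)` is an isomorphism. -/
theorem statement11 (X : SSet) [SSet.Quasicategory X] (f : X _⦋1⦌) :
    IsQuasiIso f ↔ IsIso (hoMk X f rfl rfl) := by
  rw [isQuasiIso_iff_nonempty_invStruct]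
  exact ⟨fun ⟨I⟩ ↦ isIso_hoMkEdge_of_invStruct I,
    nonempty_invStruct_of_isIso_hoMkEdge (Edge.mk' f)⟩

end Paper
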